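/- Let K be a category, G ≤ Aut(K) a translative right-normal automorphism group such that the orbit category K/G is uniquely representable by irreducible arrows, and let r[K/G] be the flat orbit category with composition x • y = r(x*y). Then every subcategory of r[K/G] generated by a finite directed circle is simple: if vertices x and y lie on a common finite directed cycle of r[K/G], then there is at most one arrow from x to y and at most one arrow from y to x in that subcategory. -/
import Mathlib


set_option linter.unusedVariables false

/-- A small category, presented as a directed graph with a partial composition
that is defined exactly on composable pairs of arrows. -/
structure SmallCat where
  Obj : Type
  Arr : Type
  src : Arr → Obj
  tgt : Arr → Obj
  id : Obj → Arr
  src_id : ∀ x, src (id x) = x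
  tgt_id : ∀ x, tgt (id x) = x
  comp : ∀ a b, tgt a = src b → Arr
  src_comp : ∀ a b h, src (comp a b h) = src a
  tgt_comp : ∀ a b h, tgt (comp a b h) = tgt b
  id_comp : ∀ a, comp (id (src a)) a (tgt_id (src a)) = a
  comp_id : ∀ a, comp a (id (tgt a)) ((src_id (tgt a)).symm) = a
  assoc : ∀ a b c (hab : tgt a = src b) (hbc : tgt b = src c),
    comp (comp a b hab) c (by rw [tgt_comp]; exact hbc) =
    comp a (comp b c hbc) (by rw [src_comp]; exact hab)

/-- An action of a group `G` on a small category `K` by category automorphisms,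
written exponentially (left-associative: `a^(g*h) = (a^g)^h`). -/
structure CatAction (G : Type) [Group G] (K : SmallCat) where
  onObj : G → K.Obj → K.Obj
  onArr : G → K.Arr → K.Arr
  onObj_one : ∀ x, onObj 1 x = x
  onObj_mul : ∀ g h x, onObj (g * h) x = onObj h (onObj g x)
  onArr_one : ∀ a, onArr 1 a = a
  onArr_mul : ∀ g h a, onArr (g * h) a = onArr h (onArr g a)
  src_onArr : ∀ g a, K.src (onArr g a) = onObj g (K.src a)
  tgt_onArr : ∀ g a, K.tgt (onArr g a) = onObj g (K.tgt a)
  onArr_id : ∀ g x, onArr g (K.id x) = K.id (onObj g x)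
  onArr_comp : ∀ g a b (h : K.tgt a = K.src b),
    onArr g (K.comp a b h) = K.comp (onArr g a) (onArr g b)
      (by rw [tgt_onArr, src_onArr, h])

/-- The action is semi-regular: only the unit fixes an object or an arrow. -/
def SemiRegular {G : Type} [Group G] {K : SmallCat} (ρ : CatAction G K) : Prop :=
  (∀ g x, ρ.onObj g x = x → g = 1) ∧ (∀ g a, ρ.onArr g a = a → g = 1)

/-- Orbit of an object. -/
def orbitO {G : Type} [Group G] {K : SmallCat} (ρ : CatAction G K) (x : K.Obj) : Set K.Obj :=
  {y | ∃ g : G, ρ.onObj g x = y}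

/-- The arrows of the full subcategory generated by the orbit of `x`. -/
def orbitA {G : Type} [Group G] {K : SmallCat} (ρ : CatAction G K) (x : K.Obj) : Set K.Arr :=
  {a | K.src a ∈ orbitO ρ x ∧ K.tgt a ∈ orbitO ρ x}

/-- The setoid of object orbits. -/
def objSetoid {G : Type} [Group G] {K : SmallCat} (ρ : CatAction G K) : Setoid K.Obj where
  r x y := ∃ g : G, ρ.onObj g x = y
  iseqv := by
    constructor
    · exact fun x => ⟨1, ρ.onObj_one x⟩
    · rintro x y ⟨g, rfl⟩
      exact ⟨g⁻¹, by rw [← ρ.onObj_mul, mul_inv_cancel, ρ.onObj_one]⟩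
    · rintro x y z ⟨g, rfl⟩ ⟨h, rfl⟩
      exact ⟨g * h, by rw [ρ.onObj_mul]⟩

/-- The setoid of arrow orbits. -/
def arrSetoid {G : Type} [Group G] {K : SmallCat} (ρ : CatAction G K) : Setoid K.Arr where
  r a b := ∃ g : G, ρ.onArr g a = b
  iseqv := by
    constructor
    · exact fun a => ⟨1, ρ.onArr_one a⟩
    · rintro a b ⟨g, rfl⟩
      exact ⟨g⁻¹, by rw [← ρ.onArr_mul, mul_inv_cancel, ρ.onArr_one]⟩
    · rintro a b c ⟨g, rfl⟩ ⟨h, rfl⟩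
      exact ⟨g * h, by rw [ρ.onArr_mul]⟩

/-- The source of an arrow orbit. -/
def srcQ {G : Type} [Group G] {K : SmallCat} (ρ : CatAction G K) :
    Quotient (arrSetoid ρ) → Quotient (objSetoid ρ) :=
  Quotient.lift (fun a => Quotient.mk (objSetoid ρ) (K.src a)) (by
    rintro a b ⟨g, rfl⟩
    exact Quotient.sound ⟨g, (ρ.src_onArr g a).symm⟩)

/-- The target of an arrow orbit. -/
def tgtQ {G : Type} [Group G] {K : SmallCat} (ρ : CatAction G K) :
    Quotient (arrSetoid ρ) → Quotient (objSetoid ρ) :=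
  Quotient.lift (fun a => Quotient.mk (objSetoid ρ) (K.tgt a)) (by
    rintro a b ⟨g, rfl⟩
    exact Quotient.sound ⟨g, (ρ.tgt_onArr g a).symm⟩)

/-- The identity arrow orbit of an object orbit. -/
def idQ {G : Type} [Group G] {K : SmallCat} (ρ : CatAction G K) :
    Quotient (objSetoid ρ) → Quotient (arrSetoid ρ) :=
  Quotient.lift (fun x => Quotient.mk (arrSetoid ρ) (K.id x)) (by
    rintro x y ⟨g, rfl⟩
    exact Quotient.sound ⟨g, ρ.onArr_id g x⟩)

/-- `CompRelQ ρ α β γ` expresses that in the orbit category the composite of the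
arrow orbits `α` and `β` is `γ`, i.e. that `γ` is the orbit of a composite of
composable representatives of `α` and `β`. -/
def CompRelQ {G : Type} [Group G] {K : SmallCat} (ρ : CatAction G K)
    (α β γ : Quotient (arrSetoid ρ)) : Prop :=
  ∃ (a b : K.Arr) (h : K.tgt a = K.src b),
    Quotient.mk (arrSetoid ρ) a = α ∧ Quotient.mk (arrSetoid ρ) b = β ∧
    Quotient.mk (arrSetoid ρ) (K.comp a b h) = γ

/-- An annotation: a contravariant homomorphism from a small category into a group. -/
structure Annotation (K : SmallCat) (G : Type) [Group G] where
  map : K.Arr → G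
  map_id : ∀ x, map (K.id x) = 1
  map_comp : ∀ a b (h : K.tgt a = K.src b), map (K.comp a b h) = map b * map a

/-- The partial operation `⊙` of a representation `(K, A, G)`. -/
def odot {G : Type} [Group G] {K : SmallCat} (A : Annotation K G) (p q : K.Arr × G)
    (h : K.tgt p.1 = K.src q.1) (_ : q.2 = A.map p.1 * p.2) : K.Arr × G :=
  (K.comp p.1 q.1 h, p.2)

/-- The unfolding `E(K,A,G)` of a representation `(K,A,G)`. -/
def Unfolding (K : SmallCat) {G : Type} [Group G] (A : Annotation K G) : SmallCat where
  Obj := K.Obj × G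
  Arr := K.Arr × G
  src p := (K.src p.1, p.2)
  tgt p := (K.tgt p.1, A.map p.1 * p.2)
  id x := (K.id x.1, x.2)
  src_id x := by simp [K.src_id]
  tgt_id x := by simp [K.tgt_id, A.map_id]
  comp p q h := (K.comp p.1 q.1 (congrArg Prod.fst h), p.2)
  src_comp p q h := by simp [K.src_comp]
  tgt_comp p q h := by
    have h2 : A.map p.1 * p.2 = q.2 := congrArg Prod.snd h
    simp [K.tgt_comp, A.map_comp, mul_assoc, h2]
  id_comp p := by
    refine Prod.ext ?_ rfl
    exact K.id_comp p.1
  comp_id p := by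
    refine Prod.ext ?_ rfl
    exact K.comp_id p.1
  assoc p q s hpq hqs := by
    refine Prod.ext ?_ rfl
    exact K.assoc p.1 q.1 s.1 (congrArg Prod.fst hpq) (congrArg Prod.fst hqs)

/-- A homomorphism (functor) between small categories. -/
structure CatHom (K L : SmallCat) where
  onObj : K.Obj → L.Obj
  onArr : K.Arr → L.Arr
  src_onArr : ∀ a, L.src (onArr a) = onObj (K.src a)
  tgt_onArr : ∀ a, L.tgt (onArr a) = onObj (K.tgt a)
  onArr_id : ∀ x, onArr (K.id x) = L.id (onObj x)
  onArr_comp : ∀ a b (h : K.tgt a = K.src b),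
    onArr (K.comp a b h) = L.comp (onArr a) (onArr b)
      (by rw [tgt_onArr, src_onArr, h])

/-- A functor is full. -/
def IsFull {K L : SmallCat} (F : CatHom K L) : Prop :=
  ∀ (x y : K.Obj) (b : L.Arr), L.src b = F.onObj x → L.tgt b = F.onObj y →
    ∃ a : K.Arr, K.src a = x ∧ K.tgt a = y ∧ F.onArr a = b

/-- A functor is faithful. -/
def IsFaithful {K L : SmallCat} (F : CatHom K L) : Prop :=
  ∀ a a' : K.Arr, K.src a = K.src a' → K.tgt a = K.tgt a' → F.onArr a = F.onArr a' → a = a'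

/-- A translative automorphism group action: semi-regular, and any two orbits
generate isomorphic full subcategories, by an isomorphism commuting with the action. -/
def Translative {G : Type} [Group G] {K : SmallCat} (ρ : CatAction G K) : Prop :=
  SemiRegular ρ ∧
  ∀ a b : K.Obj, ∃ (φo : K.Obj → K.Obj) (φa : K.Arr → K.Arr),
    Set.BijOn φo (orbitO ρ a) (orbitO ρ b) ∧
    Set.BijOn φa (orbitA ρ a) (orbitA ρ b) ∧
    (∀ f ∈ orbitA ρ a, K.src (φa f) = φo (K.src f)) ∧
    (∀ f ∈ orbitA ρ a, K.tgt (φa f) = φo (K.tgt f)) ∧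
    (∀ x ∈ orbitO ρ a, φa (K.id x) = K.id (φo x)) ∧
    (∀ (f f' : K.Arr) (h : K.tgt f = K.src f'), f ∈ orbitA ρ a → f' ∈ orbitA ρ a →
      ∀ h', φa (K.comp f f' h) = K.comp (φa f) (φa f') h') ∧
    (∀ (g : G), ∀ x ∈ orbitO ρ a, φo (ρ.onObj g x) = ρ.onObj g (φo x)) ∧
    (∀ (g : G), ∀ f ∈ orbitA ρ a, φa (ρ.onArr g f) = ρ.onArr g (φa f))

/-- `T` is a transversal of the object orbits. -/
def IsTransversal {G : Type} [Group G] {K : SmallCat} (ρ : CatAction G K)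
    (T : Set K.Obj) : Prop :=
  ∀ x : K.Obj, ∃! t, t ∈ T ∧ t ∈ orbitO ρ x

/-- The natural annotation associated with the canonical automorphisms `gT`. -/
def natAnn {G : Type} [Group G] {K : SmallCat} (ρ : CatAction G K)
    (gT : K.Obj → G) (a : K.Arr) : G :=
  gT (K.tgt a) * (gT (K.src a))⁻¹

/-- `RightNormalWith ρ C` : the map `C` witnesses that `ρ` is right-normal:
in the orbit category, loop orbits can be moved from the left of an arrow orbit
to its right. -/
def RightNormalWith {G : Type} [Group G] {K : SmallCat} (ρ : CatAction G K)
    (C : Quotient (arrSetoid ρ) → Quotient (arrSetoid ρ) → Quotient (arrSetoid ρ)) : Prop :=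
  (∀ (a x : K.Arr),
    srcQ ρ (Quotient.mk (arrSetoid ρ) x) = srcQ ρ (Quotient.mk (arrSetoid ρ) a) →
    tgtQ ρ (Quotient.mk (arrSetoid ρ) x) = srcQ ρ (Quotient.mk (arrSetoid ρ) a) →
    ((srcQ ρ (C (Quotient.mk (arrSetoid ρ) a) (Quotient.mk (arrSetoid ρ) x)) =
        tgtQ ρ (Quotient.mk (arrSetoid ρ) a) ∧
      tgtQ ρ (C (Quotient.mk (arrSetoid ρ) a) (Quotient.mk (arrSetoid ρ) x)) =
        tgtQ ρ (Quotient.mk (arrSetoid ρ) a)) ∧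
      (∀ (x' a' : K.Arr) (h1 : K.tgt x' = K.src a'),
        Quotient.mk (arrSetoid ρ) x' = Quotient.mk (arrSetoid ρ) x →
        Quotient.mk (arrSetoid ρ) a' = Quotient.mk (arrSetoid ρ) a →
        ∀ (a'' c : K.Arr) (h2 : K.tgt a'' = K.src c),
          Quotient.mk (arrSetoid ρ) a'' = Quotient.mk (arrSetoid ρ) a →
          Quotient.mk (arrSetoid ρ) c =
            C (Quotient.mk (arrSetoid ρ) a) (Quotient.mk (arrSetoid ρ) x) →
          Quotient.mk (arrSetoid ρ) (K.comp x' a' h1) =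
            Quotient.mk (arrSetoid ρ) (K.comp a'' c h2)))) ∧
  (∀ a : K.Arr,
    C (Quotient.mk (arrSetoid ρ) a) (Quotient.mk (arrSetoid ρ) (K.id (K.src a))) =
      Quotient.mk (arrSetoid ρ) (K.id (K.tgt a)))

/-- The action `ρ` is right-normal. -/
def RightNormal {G : Type} [Group G] {K : SmallCat} (ρ : CatAction G K) : Prop :=
  ∃ C, RightNormalWith ρ C

/-- An arrow orbit is an identity orbit. -/
def IsIdQ {G : Type} [Group G] {K : SmallCat} (ρ : CatAction G K)
    (α : Quotient (arrSetoid ρ)) : Prop :=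
  ∃ x : K.Obj, α = Quotient.mk (arrSetoid ρ) (K.id x)

/-- An arrow of the orbit category is reducible: it is an arrow with the same
endpoints followed by a non-identity loop. -/
def ReducibleQ {G : Type} [Group G] {K : SmallCat} (ρ : CatAction G K)
    (β : Quotient (arrSetoid ρ)) : Prop :=
  ∃ b l, CompRelQ ρ b l β ∧ tgtQ ρ b = tgtQ ρ β ∧ ¬ IsIdQ ρ l

/-- An arrow of the orbit category is irreducible. -/
def IrreducibleQ {G : Type} [Group G] {K : SmallCat} (ρ : CatAction G K)
    (β : Quotient (arrSetoid ρ)) : Prop :=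
  ¬ ReducibleQ ρ β

/-- The orbit category is uniquely representable by irreducible arrows,
with irreducible part `r` and loop part `n`. -/
def UniqRep {G : Type} [Group G] {K : SmallCat} (ρ : CatAction G K)
    (r n : Quotient (arrSetoid ρ) → Quotient (arrSetoid ρ)) : Prop :=
  (∀ α, IrreducibleQ ρ (r α) ∧ srcQ ρ (r α) = srcQ ρ α ∧ tgtQ ρ (r α) = tgtQ ρ α ∧
    srcQ ρ (n α) = tgtQ ρ α ∧ tgtQ ρ (n α) = tgtQ ρ α ∧ CompRelQ ρ (r α) (n α) α) ∧
  (∀ α b l, CompRelQ ρ b l α → tgtQ ρ b = tgtQ ρ α → srcQ ρ l = tgtQ ρ l →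
    IrreducibleQ ρ b → b = r α ∧ l = n α)

/-- A right-groupal category: a small category whose objects form a group which
acts on the category by a left-associative automorphism action, compatible with
right multiplication on the objects. -/
structure RGC where
  K : SmallCat
  mul : K.Obj → K.Obj → K.Obj
  one : K.Obj
  inv : K.Obj → K.Obj
  mul_assoc : ∀ x y z, mul (mul x y) z = mul x (mul y z)
  one_mul : ∀ x, mul one x = x
  mul_one : ∀ x, mul x one = x
  inv_mul : ∀ x, mul (inv x) x = one
  mul_inv : ∀ x, mul x (inv x) = one
  act : K.Arr → K.Obj → K.Arr
  act_one : ∀ a, act a one = a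
  act_mul : ∀ a x y, act (act a x) y = act a (mul x y)
  src_act : ∀ a x, K.src (act a x) = mul (K.src a) x
  tgt_act : ∀ a x, K.tgt (act a x) = mul (K.tgt a) x
  act_id : ∀ y x, act (K.id y) x = K.id (mul y x)
  act_comp : ∀ a b (h : K.tgt a = K.src b) x,
    act (K.comp a b h) x = K.comp (act a x) (act b x) (by rw [tgt_act, src_act, h])

/-- A groupal category: a right-groupal category together with a commuting
second (left-multiplication style) action satisfying the interchange law. -/
structure GroupalCat extends RGC where
  lact : K.Obj → K.Arr → K.Arr
  lact_one : ∀ a, lact one a = a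
  lact_mul : ∀ x y a, lact x (lact y a) = lact (mul x y) a
  src_lact : ∀ x a, K.src (lact x a) = mul x (K.src a)
  tgt_lact : ∀ x a, K.tgt (lact x a) = mul x (K.tgt a)
  lact_id : ∀ x y, lact x (K.id y) = K.id (mul x y)
  lact_comp : ∀ x a b (h : K.tgt a = K.src b),
    lact x (K.comp a b h) = K.comp (lact x a) (lact x b) (by rw [tgt_lact, src_lact, h])
  lact_act : ∀ x a y, lact x (act a y) = act (lact x a) y
  interchange : ∀ (a b : K.Arr),
    K.comp (act a (K.src b)) (lact (K.tgt a) b) (by rw [tgt_act, src_lact]) =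
    K.comp (lact (K.src a) b) (act a (K.tgt b)) (by rw [tgt_lact, src_act])

/-- A po-group `P`, viewed as the simple category with a unique arrow `x → y` iff `x ≤ y`. -/
def poCat (P : Type) [Group P] [PartialOrder P] : SmallCat where
  Obj := P
  Arr := {p : P × P // p.1 ≤ p.2}
  src p := p.1.1
  tgt p := p.1.2
  id x := ⟨(x, x), le_refl x⟩
  src_id x := rfl
  tgt_id x := rfl
  comp a b h := ⟨(a.1.1, b.1.2), a.2.trans ((show (a.1).2 = (b.1).1 from h).trans_le b.2)⟩
  src_comp a b h := rfl
  tgt_comp a b h := rfl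
  id_comp a := rfl
  comp_id a := rfl
  assoc a b c hab hbc := rfl

section Helpers

variable {G : Type} [Group G] {K : SmallCat} {ρ : CatAction G K}

lemma srcQ_mk' (a : K.Arr) :
    srcQ ρ (Quotient.mk (arrSetoid ρ) a) = Quotient.mk (objSetoid ρ) (K.src a) := rfl

lemma tgtQ_mk' (a : K.Arr) :
    tgtQ ρ (Quotient.mk (arrSetoid ρ) a) = Quotient.mk (objSetoid ρ) (K.tgt a) := rfl

lemma onObj_cancel (hsr : SemiRegular ρ) {g k : G} {x : K.Obj}
    (h : ρ.onObj g x = ρ.onObj k x) : g = k := by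
  have hx : ρ.onObj (g * k⁻¹) x = x := by
    rw [ρ.onObj_mul, h, ← ρ.onObj_mul, mul_inv_cancel, ρ.onObj_one]
  have := hsr.1 _ _ hx
  rwa [mul_inv_eq_one] at this

lemma comp_exists (α β : Quotient (arrSetoid ρ))
    (h : tgtQ ρ α = srcQ ρ β) : ∃ γ, CompRelQ ρ α β γ := by
  obtain ⟨a, rfl⟩ := Quotient.exists_rep α
  obtain ⟨b, rfl⟩ := Quotient.exists_rep β
  obtain ⟨g, hg⟩ := Quotient.exact h
  have h2 : K.tgt (ρ.onArr g a) = K.src b := by rw [ρ.tgt_onArr]; exact hg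
  exact ⟨Quotient.mk (arrSetoid ρ) (K.comp (ρ.onArr g a) b h2),
    ρ.onArr g a, b, h2, Quotient.sound ⟨g⁻¹, by
      rw [← ρ.onArr_mul, mul_inv_cancel, ρ.onArr_one]⟩, rfl, rfl⟩

lemma comp_src {α β γ : Quotient (arrSetoid ρ)} (h : CompRelQ ρ α β γ) :
    srcQ ρ γ = srcQ ρ α := by
  obtain ⟨a, b, hab, ha, hb, hc⟩ := h
  rw [← hc, ← ha, srcQ_mk', srcQ_mk', K.src_comp]

lemma comp_tgt {α β γ : Quotient (arrSetoid ρ)} (h : CompRelQ ρ α β γ) :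
    tgtQ ρ γ = tgtQ ρ β := by
  obtain ⟨a, b, hab, ha, hb, hc⟩ := h
  rw [← hc, ← hb, tgtQ_mk', tgtQ_mk', K.tgt_comp]

lemma comp_unique (hsr : SemiRegular ρ) {α β γ γ' : Quotient (arrSetoid ρ)}
    (h1 : CompRelQ ρ α β γ) (h2 : CompRelQ ρ α β γ') : γ = γ' := by
  obtain ⟨a, b, hab, ha, hb, hc⟩ := h1
  obtain ⟨a', b', hab', ha', hb', hc'⟩ := h2
  obtain ⟨g, rfl⟩ := Quotient.exact (ha.trans ha'.symm)
  obtain ⟨k, rfl⟩ := Quotient.exact (hb.trans hb'.symm)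
  have hg : g = k := by
    refine onObj_cancel hsr (x := K.src b) ?_
    have := hab'
    rw [ρ.tgt_onArr, ρ.src_onArr, hab] at this
    exact this
  subst hg
  rw [← hc, ← hc']
  exact Quotient.sound ⟨g, ρ.onArr_comp g a b hab⟩

lemma comp_assoc_rel (hsr : SemiRegular ρ) {α β c δ τ ε : Quotient (arrSetoid ρ)}
    (h1 : CompRelQ ρ α β δ) (h2 : CompRelQ ρ δ c τ) (h3 : CompRelQ ρ β c ε) :
    CompRelQ ρ α ε τ := by
  obtain ⟨d, b', hdb, hd, hb', hτ⟩ := h2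
  obtain ⟨a, b, hab, ha, hb, hδ⟩ := h1
  obtain ⟨g, hg⟩ := Quotient.exact (hδ.trans hd.symm)
  set A := ρ.onArr g a with hA
  set B := ρ.onArr g b with hB
  have pAB : K.tgt A = K.src B := by rw [hA, hB, ρ.tgt_onArr, ρ.src_onArr, hab]
  have hd' : d = K.comp A B pAB := by
    rw [← hg, ρ.onArr_comp]
  subst hd'
  have pBb : K.tgt B = K.src b' := by
    rw [← K.tgt_comp A B pAB]; exact hdb
  have pA : K.tgt A = K.src (K.comp B b' pBb) := by rw [K.src_comp]; exact pAB
  have hABb : K.comp (K.comp A B pAB) b' hdb = K.comp A (K.comp B b' pBb) pA :=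
    K.assoc A B b' pAB pBb
  refine ⟨A, K.comp B b' pBb, pA, ?_, ?_, ?_⟩
  · rw [← ha]
    exact Quotient.sound ⟨g⁻¹, by rw [hA, ← ρ.onArr_mul, mul_inv_cancel, ρ.onArr_one]⟩
  · refine comp_unique hsr (γ := Quotient.mk (arrSetoid ρ) (K.comp B b' pBb)) ?_ h3
    refine ⟨B, b', pBb, ?_, hb', rfl⟩
    rw [← hb]
    exact Quotient.sound ⟨g⁻¹, by rw [hB, ← ρ.onArr_mul, mul_inv_cancel, ρ.onArr_one]⟩
  · rw [← hABb]; exact hτ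

end Helpers

/-- Let `G ≤ Aut K` be translative and right-normal, with `K/G`
uniquely representable by irreducible arrows (irreducible part `r`, loop part
`n`).  Then every subcategory of the flat orbit category `r[K/G]` generated by
a finite directed circle is simple: if `α` and `β` are parallel arrows of
`r[K/G]` from `x` to `y` and there is an arrow `γ` of `r[K/G]` from `y` back
to `x` (so that `x` and `y` lie on a common finite directed cycle), then
`α = β`. -/
theorem flat_orbit_category_circles_simple {G : Type} [Group G] (K : SmallCat)
    (ρ : CatAction G K) (htr : Translative ρ) (hrn : RightNormal ρ)
    (r n : Quotient (arrSetoid ρ) → Quotient (arrSetoid ρ))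
    (hur : UniqRep ρ r n) :
    ∀ α β γ : Quotient (arrSetoid ρ),
      r α = α → r β = β → r γ = γ →
      srcQ ρ α = srcQ ρ β → tgtQ ρ α = tgtQ ρ β →
      srcQ ρ γ = tgtQ ρ α → tgtQ ρ γ = srcQ ρ α →
      α = β := by
  intro α β γ hrα hrβ hrγ hs ht hsγ htγ
  obtain ⟨C, hC1, hC2⟩ := hrn
  have hsr : SemiRegular ρ := htr.1
  -- δ = α * γ (a loop at src α), ε = γ * β (a loop at tgt α), τ = δ * β = α * ε
  obtain ⟨δ, hδ⟩ := comp_exists α γ hsγ.symm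
  obtain ⟨ε, hε⟩ := comp_exists γ β (htγ.trans hs)
  have hδtgt : tgtQ ρ δ = srcQ ρ β := (comp_tgt hδ).trans (htγ.trans hs)
  have hδsrc : srcQ ρ δ = srcQ ρ β := (comp_src hδ).trans hs
  obtain ⟨τ, hτ⟩ := comp_exists δ β hδtgt
  have hαε : CompRelQ ρ α ε τ := comp_assoc_rel hsr hδ hτ hε
  have hτtgt : tgtQ ρ τ = tgtQ ρ β := comp_tgt hτ
  -- α side: α = r τ
  have hirrα : IrreducibleQ ρ α := hrα ▸ (hur.1 α).1
  have hεloop : srcQ ρ ε = tgtQ ρ ε := by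
    rw [comp_src hε, comp_tgt hε, hsγ, ht]
  have hα : α = r τ :=
    (hur.2 τ α ε hαε (ht.trans hτtgt.symm) hεloop hirrα).1
  -- β side: use right-normality to move the loop δ to the right of β
  obtain ⟨d0, hd0⟩ := Quotient.exists_rep δ
  obtain ⟨b0, hb0⟩ := Quotient.exists_rep β
  have hcond1 : srcQ ρ (Quotient.mk (arrSetoid ρ) d0) =
      srcQ ρ (Quotient.mk (arrSetoid ρ) b0) := by rw [hd0, hb0]; exact hδsrc
  have hcond2 : tgtQ ρ (Quotient.mk (arrSetoid ρ) d0) =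
      srcQ ρ (Quotient.mk (arrSetoid ρ) b0) := by rw [hd0, hb0]; exact hδtgt
  obtain ⟨⟨hCsrc, hCtgt⟩, hmove⟩ := hC1 b0 d0 hcond1 hcond2
  rw [hb0, hd0] at hCsrc hCtgt
  set L := C β δ with hL
  -- representatives for β * L
  obtain ⟨σ, a'', cc, h2, ha'', hcc, hσ⟩ :=
    comp_exists β L ((hb0 ▸ hCsrc : srcQ ρ L = tgtQ ρ β).symm)
  -- representatives for δ * β = τ
  obtain ⟨x', a', h1, hx', ha', hτeq⟩ := hτ
  have hmoved : Quotient.mk (arrSetoid ρ) (K.comp x' a' h1) =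
      Quotient.mk (arrSetoid ρ) (K.comp a'' cc h2) := by
    refine hmove x' a' h1 (by rw [hx', hd0]) (by rw [ha', hb0]) a'' cc h2
      (by rw [ha'', hb0]) ?_
    rw [hcc, hL, hb0, hd0]
  have hβL : CompRelQ ρ β L τ :=
    ⟨a'', cc, h2, ha'', hcc, by rw [← hτeq, hmoved]⟩
  have hirrβ : IrreducibleQ ρ β := hrβ ▸ (hur.1 β).1
  have hLloop : srcQ ρ L = tgtQ ρ L := hCsrc.trans hCtgt.symm
  have hβ : β = r τ := (hur.2 τ β L hβL hτtgt.symm hLloop hirrβ).1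
  rw [hα, hβ]
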